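/- arXiv:2111.13339 — 2 statements merged into one kernel-verified Lean document; each statement's English description precedes it below -/
import Mathlib

section
/- There exists a universal constant C > 0 such that for every smooth function φ(t,x) on (0,∞)×ℝ² and every (t,x) with 1 ≤ t/2 ≤ r (where r = |x|, ω = x/r), one has |r^{1/2}∂φ(t,x) - ω̂ D₋(r^{1/2}φ(t,x))| ≤ C⟨t+|x|⟩^{-1/2}[φ(t,x)]₁, where ω̂ = (-1, ω₁, ω₂), ∂φ = (∂ₜφ, ∂₁φ, ∂₂φ), D₋ = (∂ᵣ - ∂ₜ)/2, and [φ]₁ = |φ|₁ + ⟨t-r⟩|∂φ|, with |φ|₁ the sum of |Γφ| over the six vector fields Γ ∈ {L₁, L₂, Ω, ∂₀, ∂₁, ∂₂} together with |φ|. -/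
noncomputable section

def dT (φ : ℝ → ℝ → ℝ → ℝ) : ℝ → ℝ → ℝ → ℝ := fun t x1 x2 => deriv (fun s => φ s x1 x2) t
def d1 (φ : ℝ → ℝ → ℝ → ℝ) : ℝ → ℝ → ℝ → ℝ := fun t x1 x2 => deriv (fun s => φ t s x2) x1
def d2 (φ : ℝ → ℝ → ℝ → ℝ) : ℝ → ℝ → ℝ → ℝ := fun t x1 x2 => deriv (fun s => φ t x1 s) x2
def L1 (φ : ℝ → ℝ → ℝ → ℝ) : ℝ → ℝ → ℝ → ℝ := fun t x1 x2 => x1 * dT φ t x1 x2 + t * d1 φ t x1 x2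
def L2 (φ : ℝ → ℝ → ℝ → ℝ) : ℝ → ℝ → ℝ → ℝ := fun t x1 x2 => x2 * dT φ t x1 x2 + t * d2 φ t x1 x2
def Omg (φ : ℝ → ℝ → ℝ → ℝ) : ℝ → ℝ → ℝ → ℝ := fun t x1 x2 => x1 * d2 φ t x1 x2 - x2 * d1 φ t x1 x2
/-- r = |x| -/
def rr (x1 x2 : ℝ) : ℝ := Real.sqrt (x1 ^ 2 + x2 ^ 2)
/-- ⟨y⟩ = √(1+y²) -/
def jb (y : ℝ) : ℝ := Real.sqrt (1 + y ^ 2)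
/-- radial derivative ∂ᵣ -/
def dr (φ : ℝ → ℝ → ℝ → ℝ) : ℝ → ℝ → ℝ → ℝ := fun t x1 x2 =>
  (x1 / rr x1 x2) * d1 φ t x1 x2 + (x2 / rr x1 x2) * d2 φ t x1 x2
/-- D₋ = (∂ᵣ - ∂ₜ)/2 -/
def Dm (φ : ℝ → ℝ → ℝ → ℝ) : ℝ → ℝ → ℝ → ℝ := fun t x1 x2 =>
  (dr φ t x1 x2 - dT φ t x1 x2) / 2
/-- |∂φ| : Euclidean norm of (∂ₜφ, ∂₁φ, ∂₂φ) -/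
def gradNorm (φ : ℝ → ℝ → ℝ → ℝ) (t x1 x2 : ℝ) : ℝ :=
  Real.sqrt (dT φ t x1 x2 ^ 2 + d1 φ t x1 x2 ^ 2 + d2 φ t x1 x2 ^ 2)
/-- |φ|₁ : sum of |φ| and |Γφ| over the six vector fields -/
def norm1 (φ : ℝ → ℝ → ℝ → ℝ) (t x1 x2 : ℝ) : ℝ :=
  |φ t x1 x2| + |L1 φ t x1 x2| + |L2 φ t x1 x2| + |Omg φ t x1 x2|
    + |dT φ t x1 x2| + |d1 φ t x1 x2| + |d2 φ t x1 x2|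
/-- [φ]₁ = |φ|₁ + ⟨t-r⟩|∂φ| -/
def bracket1 (φ : ℝ → ℝ → ℝ → ℝ) (t x1 x2 : ℝ) : ℝ :=
  norm1 φ t x1 x2 + jb (t - rr x1 x2) * gradNorm φ t x1 x2
/-- r^{1/2}φ -/
def sw (φ : ℝ → ℝ → ℝ → ℝ) : ℝ → ℝ → ℝ → ℝ := fun t x1 x2 => Real.sqrt (rr x1 x2) * φ t x1 x2

/-!
Write `s = √r`. Since `∂ᵣ s = 1 / (2 s)`, `D₋(s φ) = s D₋φ + φ / (4 s)`, so each component of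
`s ∂φ - ω̂ D₋(s φ)` is `s` times a combination of the good derivatives `D₊ = (∂ᵣ + ∂ₜ) / 2`
and `Ω / r`, up to `O(|φ| / s)`. Both good derivatives are `O([φ]₁ / r)`: trivially for `Ω / r`,
and for `D₊` because `2 r D₊ = ω · L - (t - r) ∂ᵣ` with `|t - r| ≤ ⟨t - r⟩`. Hence the error
is `O([φ]₁ / √r)`, and `⟨t + r⟩ ≤ 4 r` when `t ≤ 2 r` and `r ≥ 1`.
-/

/-- The good derivative `D₊`. -/
def Dp (φ : ℝ → ℝ → ℝ → ℝ) : ℝ → ℝ → ℝ → ℝ := fun t x1 x2 =>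
  (dr φ t x1 x2 + dT φ t x1 x2) / 2

section Pointwise

variable (φ : ℝ → ℝ → ℝ → ℝ) (t x1 x2 : ℝ)

lemma rr_sq : rr x1 x2 ^ 2 = x1 ^ 2 + x2 ^ 2 :=
  Real.sq_sqrt (by positivity)

lemma rr_nonneg : 0 ≤ rr x1 x2 :=
  Real.sqrt_nonneg _

lemma abs_div_rr_le_one_left : |x1 / rr x1 x2| ≤ 1 := by
  rw [abs_div, abs_of_nonneg (rr_nonneg x1 x2)]
  exact div_le_one_of_le₀ (Real.abs_le_sqrt (by nlinarith)) (Real.sqrt_nonneg _)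

lemma abs_div_rr_le_one_right : |x2 / rr x1 x2| ≤ 1 := by
  rw [abs_div, abs_of_nonneg (rr_nonneg x1 x2)]
  exact div_le_one_of_le₀ (Real.abs_le_sqrt (by nlinarith)) (Real.sqrt_nonneg _)

lemma abs_le_jb (y : ℝ) : |y| ≤ jb y :=
  Real.abs_le_sqrt (by linarith)

lemma abs_d1_le_gradNorm : |d1 φ t x1 x2| ≤ gradNorm φ t x1 x2 :=
  Real.abs_le_sqrt (by nlinarith)

lemma abs_d2_le_gradNorm : |d2 φ t x1 x2| ≤ gradNorm φ t x1 x2 :=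
  Real.abs_le_sqrt (by nlinarith)

lemma abs_dr_le_two_mul_gradNorm : |dr φ t x1 x2| ≤ 2 * gradNorm φ t x1 x2 := by
  have h1 := abs_d1_le_gradNorm φ t x1 x2
  have h2 := abs_d2_le_gradNorm φ t x1 x2
  calc |dr φ t x1 x2|
      ≤ |x1 / rr x1 x2| * |d1 φ t x1 x2| + |x2 / rr x1 x2| * |d2 φ t x1 x2| := by
        simpa only [dr, abs_mul] using
          abs_add_le (x1 / rr x1 x2 * d1 φ t x1 x2) (x2 / rr x1 x2 * d2 φ t x1 x2)
    _ ≤ 1 * gradNorm φ t x1 x2 + 1 * gradNorm φ t x1 x2 := by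
        gcongr
        exacts [abs_div_rr_le_one_left x1 x2, abs_div_rr_le_one_right x1 x2]
    _ = 2 * gradNorm φ t x1 x2 := by ring

lemma abs_le_bracket1 : |φ t x1 x2| ≤ bracket1 φ t x1 x2 := by
  have := mul_nonneg (Real.sqrt_nonneg (1 + (t - rr x1 x2) ^ 2)) (Real.sqrt_nonneg
    (dT φ t x1 x2 ^ 2 + d1 φ t x1 x2 ^ 2 + d2 φ t x1 x2 ^ 2))
  simp only [bracket1, norm1, jb, gradNorm]
  linarith [abs_nonneg (L1 φ t x1 x2), abs_nonneg (L2 φ t x1 x2), abs_nonneg (Omg φ t x1 x2),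
    abs_nonneg (dT φ t x1 x2), abs_nonneg (d1 φ t x1 x2), abs_nonneg (d2 φ t x1 x2)]

lemma bracket1_nonneg : 0 ≤ bracket1 φ t x1 x2 :=
  (abs_nonneg _).trans (abs_le_bracket1 φ t x1 x2)

lemma abs_Omg_le_bracket1 : |Omg φ t x1 x2| ≤ bracket1 φ t x1 x2 := by
  have := mul_nonneg (Real.sqrt_nonneg (1 + (t - rr x1 x2) ^ 2)) (Real.sqrt_nonneg
    (dT φ t x1 x2 ^ 2 + d1 φ t x1 x2 ^ 2 + d2 φ t x1 x2 ^ 2))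
  simp only [bracket1, norm1, jb, gradNorm]
  linarith [abs_nonneg (L1 φ t x1 x2), abs_nonneg (L2 φ t x1 x2), abs_nonneg (φ t x1 x2),
    abs_nonneg (dT φ t x1 x2), abs_nonneg (d1 φ t x1 x2), abs_nonneg (d2 φ t x1 x2)]

lemma abs_L1_add_abs_L2_add_jb_mul_gradNorm_le_bracket1 :
    |L1 φ t x1 x2| + |L2 φ t x1 x2| + jb (t - rr x1 x2) * gradNorm φ t x1 x2
      ≤ bracket1 φ t x1 x2 := by
  simp only [bracket1, norm1]
  linarith [abs_nonneg (φ t x1 x2), abs_nonneg (Omg φ t x1 x2),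
    abs_nonneg (dT φ t x1 x2), abs_nonneg (d1 φ t x1 x2), abs_nonneg (d2 φ t x1 x2)]

/-- The Lorentz boosts recover the good derivative up to the factor `t - r`:
`ω · L = r ∂ₜ + t ∂ᵣ = 2 r D₊ + (t - r) ∂ᵣ`. -/
lemma two_mul_rr_mul_Dp (hr : rr x1 x2 ≠ 0) :
    2 * rr x1 x2 * Dp φ t x1 x2 = x1 / rr x1 x2 * L1 φ t x1 x2 + x2 / rr x1 x2 * L2 φ t x1 x2
      - (t - rr x1 x2) * dr φ t x1 x2 := by
  simp only [Dp, dr, L1, L2]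
  field_simp
  linear_combination dT φ t x1 x2 * rr_sq x1 x2

lemma abs_Dp_le (hr : 0 < rr x1 x2) : |Dp φ t x1 x2| ≤ bracket1 φ t x1 x2 / rr x1 x2 := by
  have hL1 : |x1 / rr x1 x2 * L1 φ t x1 x2| ≤ |L1 φ t x1 x2| := by
    rw [abs_mul]; exact mul_le_of_le_one_left (abs_nonneg _) (abs_div_rr_le_one_left x1 x2)
  have hL2 : |x2 / rr x1 x2 * L2 φ t x1 x2| ≤ |L2 φ t x1 x2| := by
    rw [abs_mul]; exact mul_le_of_le_one_left (abs_nonneg _) (abs_div_rr_le_one_right x1 x2)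
  have hJ : |(t - rr x1 x2) * dr φ t x1 x2| ≤ 2 * (jb (t - rr x1 x2) * gradNorm φ t x1 x2) := by
    rw [abs_mul, mul_left_comm]
    exact mul_le_mul (abs_le_jb _) (abs_dr_le_two_mul_gradNorm φ t x1 x2) (abs_nonneg _)
      ((abs_nonneg _).trans (abs_le_jb _))
  have hJG : 0 ≤ jb (t - rr x1 x2) * gradNorm φ t x1 x2 :=
    mul_nonneg ((abs_nonneg _).trans (abs_le_jb _)) (Real.sqrt_nonneg _)
  have hsum : 2 * rr x1 x2 * |Dp φ t x1 x2| ≤ 2 * bracket1 φ t x1 x2 := by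
    rw [← abs_of_pos (by positivity : (0 : ℝ) < 2 * rr x1 x2), ← abs_mul,
      two_mul_rr_mul_Dp φ t x1 x2 hr.ne']
    have := abs_L1_add_abs_L2_add_jb_mul_gradNorm_le_bracket1 φ t x1 x2
    have := abs_add_le (x1 / rr x1 x2 * L1 φ t x1 x2) (x2 / rr x1 x2 * L2 φ t x1 x2)
    have := abs_sub (x1 / rr x1 x2 * L1 φ t x1 x2 + x2 / rr x1 x2 * L2 φ t x1 x2)
      ((t - rr x1 x2) * dr φ t x1 x2)
    linarith [abs_nonneg (L1 φ t x1 x2), abs_nonneg (L2 φ t x1 x2)]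
  rw [le_div_iff₀ hr]
  linarith

lemma abs_Dp_add_abs_Omg_div_rr_le (hr : 0 < rr x1 x2) :
    |Dp φ t x1 x2| + |Omg φ t x1 x2 / rr x1 x2| ≤ 2 * (bracket1 φ t x1 x2 / rr x1 x2) := by
  have hΩ : |Omg φ t x1 x2 / rr x1 x2| ≤ bracket1 φ t x1 x2 / rr x1 x2 := by
    rw [abs_div, abs_of_pos hr]
    exact div_le_div_of_nonneg_right (abs_Omg_le_bracket1 φ t x1 x2) hr.le
  linarith [abs_Dp_le φ t x1 x2 hr]

lemma d1_eq (hr : rr x1 x2 ≠ 0) :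
    d1 φ t x1 x2
      = x1 / rr x1 x2 * dr φ t x1 x2 - x2 / rr x1 x2 * (Omg φ t x1 x2 / rr x1 x2) := by
  simp only [dr, Omg]
  field_simp
  linear_combination d1 φ t x1 x2 * rr_sq x1 x2

lemma d2_eq (hr : rr x1 x2 ≠ 0) :
    d2 φ t x1 x2
      = x2 / rr x1 x2 * dr φ t x1 x2 + x1 / rr x1 x2 * (Omg φ t x1 x2 / rr x1 x2) := by
  simp only [dr, Omg]
  field_simp
  linear_combination d2 φ t x1 x2 * rr_sq x1 x2

end Pointwise

lemma abs_mul_add_mul_le {a b x y : ℝ} (ha : |a| ≤ 1) (hb : |b| ≤ 1) :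
    |a * x + b * y| ≤ |x| + |y| := by
  calc |a * x + b * y| ≤ |a| * |x| + |b| * |y| := by
        simpa only [abs_mul] using abs_add_le (a * x) (b * y)
    _ ≤ |x| + |y| := by
        gcongr <;> exact mul_le_of_le_one_left (abs_nonneg _) ‹_›

/-- Each component of the profile error has the form `√r u + v p / (4 √r)`. -/
lemma abs_sqrt_mul_add_mul_div_le {r u v p B : ℝ} (hr : 0 < r) (hu : |u| ≤ 2 * (B / r))
    (hv : |v| ≤ 1) (hp : |p| ≤ B) : |√r * u + v * (p / (4 * √r))| ≤ 3 * (B / √r) := by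
  have hs : 0 < √r := Real.sqrt_pos.mpr hr
  have hB : 0 ≤ B := (abs_nonneg p).trans hp
  have hsu : |√r * u| ≤ 2 * (B / √r) := by
    rw [abs_mul, abs_of_pos hs]
    calc √r * |u| ≤ √r * (2 * (B / r)) := by gcongr
      _ = 2 * (B / √r) := by
        field_simp
        rw [Real.sq_sqrt hr.le, mul_comm]
  have hvp : |v * (p / (4 * √r))| ≤ B / √r := by
    rw [abs_mul, abs_div, abs_of_pos (by positivity : (0 : ℝ) < 4 * √r)]
    calc |v| * (|p| / (4 * √r)) ≤ 1 * (B / (4 * √r)) := by gcongr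
      _ ≤ B / √r := by rw [one_mul]; gcongr; linarith
  linarith [abs_add_le (√r * u) (v * (p / (4 * √r)))]

lemma Real.sqrt_sq_add_sq_add_sq_le (a b c : ℝ) :
    √(a ^ 2 + b ^ 2 + c ^ 2) ≤ |a| + |b| + |c| := by
  rw [Real.sqrt_le_left (by positivity)]
  nlinarith [sq_abs a, sq_abs b, sq_abs c, abs_nonneg a, abs_nonneg b, abs_nonneg c,
    mul_nonneg (abs_nonneg a) (abs_nonneg b), mul_nonneg (abs_nonneg a) (abs_nonneg c),
    mul_nonneg (abs_nonneg b) (abs_nonneg c)]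

lemma inv_two_mul_sqrt_le_jb_rpow {t r : ℝ} (ht : 0 ≤ t) (htr : t ≤ 2 * r) (hr : 1 ≤ r) :
    1 / (2 * √r) ≤ jb (t + r) ^ (-(1 / 2 : ℝ)) := by
  have hjb : jb (t + r) ≤ 4 * r := by
    rw [jb, Real.sqrt_le_left (by linarith)]
    nlinarith
  calc 1 / (2 * √r) = (4 * r) ^ (-(1 / 2 : ℝ)) := by
        have h4 : √(4 : ℝ) = 2 := by
          rw [show (4 : ℝ) = 2 ^ 2 by norm_num, Real.sqrt_sq (by norm_num)]
        rw [Real.rpow_neg (by linarith), ← Real.sqrt_eq_rpow, Real.sqrt_mul (by norm_num), h4,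
          one_div]
    _ ≤ jb (t + r) ^ (-(1 / 2 : ℝ)) :=
        Real.rpow_le_rpow_of_nonpos (Real.sqrt_pos.mpr (by positivity)) hjb (by norm_num)

section Calculus

variable (φ : ℝ → ℝ → ℝ → ℝ) (t x1 x2 : ℝ)

lemma hasDerivAt_sqrt_rr_left (hr : rr x1 x2 ≠ 0) :
    HasDerivAt (fun y => √(rr y x2)) (x1 / rr x1 x2 / (2 * √(rr x1 x2))) x1 := by
  have hsq : HasDerivAt (fun y => y ^ 2 + x2 ^ 2) (2 * x1) x1 := by
    simpa using (hasDerivAt_pow 2 x1).add_const (x2 ^ 2)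
  have hrr : HasDerivAt (fun y => rr y x2) (x1 / rr x1 x2) x1 := by
    have h := hsq.sqrt (fun h => hr (by simp [rr, h]))
    rwa [mul_div_mul_left _ _ two_ne_zero] at h
  exact hrr.sqrt hr

lemma hasDerivAt_sqrt_rr_right (hr : rr x1 x2 ≠ 0) :
    HasDerivAt (fun y => √(rr x1 y)) (x2 / rr x1 x2 / (2 * √(rr x1 x2))) x2 := by
  have hsq : HasDerivAt (fun y => x1 ^ 2 + y ^ 2) (2 * x2) x2 := by
    simpa using (hasDerivAt_pow 2 x2).const_add (x1 ^ 2)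
  have hrr : HasDerivAt (fun y => rr x1 y) (x2 / rr x1 x2) x2 := by
    have h := hsq.sqrt (fun h => hr (by simp [rr, h]))
    rwa [mul_div_mul_left _ _ two_ne_zero] at h
  exact hrr.sqrt hr

variable {φ t x1 x2}

lemma Dm_sw
    (hφ : DifferentiableAt ℝ (fun p : ℝ × ℝ × ℝ => φ p.1 p.2.1 p.2.2) (t, x1, x2))
    (hr : rr x1 x2 ≠ 0) :
    Dm (sw φ) t x1 x2 = √(rr x1 x2) * Dm φ t x1 x2 + φ t x1 x2 / (4 * √(rr x1 x2)) := by
  have h1 : HasDerivAt (fun y => φ t y x2) (d1 φ t x1 x2) x1 :=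
    (hφ.comp (f := fun y => (t, y, x2)) x1 (by fun_prop)).hasDerivAt
  have h2 : HasDerivAt (fun y => φ t x1 y) (d2 φ t x1 x2) x2 :=
    (hφ.comp (f := fun y => (t, x1, y)) x2 (by fun_prop)).hasDerivAt
  have hT : dT (sw φ) t x1 x2 = √(rr x1 x2) * dT φ t x1 x2 := deriv_const_mul_field _
  have h1' : d1 (sw φ) t x1 x2
      = x1 / rr x1 x2 / (2 * √(rr x1 x2)) * φ t x1 x2 + √(rr x1 x2) * d1 φ t x1 x2 :=
    ((hasDerivAt_sqrt_rr_left x1 x2 hr).mul h1).deriv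
  have h2' : d2 (sw φ) t x1 x2
      = x2 / rr x1 x2 / (2 * √(rr x1 x2)) * φ t x1 x2 + √(rr x1 x2) * d2 φ t x1 x2 :=
    ((hasDerivAt_sqrt_rr_right x1 x2 hr).mul h2).deriv
  have hs : √(rr x1 x2) ≠ 0 := Real.sqrt_ne_zero'.mpr ((rr_nonneg x1 x2).lt_of_ne' hr)
  simp only [Dm, dr, hT, h1', h2']
  field_simp
  linear_combination (-4 * φ t x1 x2) * rr_sq x1 x2

end Calculus

section ProfileError

variable {φ : ℝ → ℝ → ℝ → ℝ} {t x1 x2 : ℝ}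

lemma abs_sqrt_rr_mul_dT_sub_Dm_sw_le
    (hφ : DifferentiableAt ℝ (fun p : ℝ × ℝ × ℝ => φ p.1 p.2.1 p.2.2) (t, x1, x2))
    (hr : 0 < rr x1 x2) :
    |√(rr x1 x2) * dT φ t x1 x2 - (-1) * Dm (sw φ) t x1 x2|
      ≤ 3 * (bracket1 φ t x1 x2 / √(rr x1 x2)) := by
  have e : √(rr x1 x2) * dT φ t x1 x2 - (-1) * Dm (sw φ) t x1 x2
      = √(rr x1 x2) * Dp φ t x1 x2 + 1 * (φ t x1 x2 / (4 * √(rr x1 x2))) := by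
    rw [Dm_sw hφ hr.ne']; simp only [Dp, Dm]; ring
  rw [e]
  refine abs_sqrt_mul_add_mul_div_le hr ?_ (by norm_num) (abs_le_bracket1 φ t x1 x2)
  linarith [abs_Dp_add_abs_Omg_div_rr_le φ t x1 x2 hr, abs_nonneg (Omg φ t x1 x2 / rr x1 x2)]

lemma abs_sqrt_rr_mul_d1_sub_Dm_sw_le
    (hφ : DifferentiableAt ℝ (fun p : ℝ × ℝ × ℝ => φ p.1 p.2.1 p.2.2) (t, x1, x2))
    (hr : 0 < rr x1 x2) :
    |√(rr x1 x2) * d1 φ t x1 x2 - x1 / rr x1 x2 * Dm (sw φ) t x1 x2|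
      ≤ 3 * (bracket1 φ t x1 x2 / √(rr x1 x2)) := by
  have e : √(rr x1 x2) * d1 φ t x1 x2 - x1 / rr x1 x2 * Dm (sw φ) t x1 x2
      = √(rr x1 x2) * (x1 / rr x1 x2 * Dp φ t x1 x2
          + -(x2 / rr x1 x2) * (Omg φ t x1 x2 / rr x1 x2))
        + -(x1 / rr x1 x2) * (φ t x1 x2 / (4 * √(rr x1 x2))) := by
    rw [Dm_sw hφ hr.ne', d1_eq φ t x1 x2 hr.ne']; simp only [Dp, Dm]; ring
  rw [e]
  refine abs_sqrt_mul_add_mul_div_le hr ?_ (by simpa using abs_div_rr_le_one_left x1 x2)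
    (abs_le_bracket1 φ t x1 x2)
  exact (abs_mul_add_mul_le (abs_div_rr_le_one_left x1 x2)
    (by simpa using abs_div_rr_le_one_right x1 x2)).trans
    (abs_Dp_add_abs_Omg_div_rr_le φ t x1 x2 hr)

lemma abs_sqrt_rr_mul_d2_sub_Dm_sw_le
    (hφ : DifferentiableAt ℝ (fun p : ℝ × ℝ × ℝ => φ p.1 p.2.1 p.2.2) (t, x1, x2))
    (hr : 0 < rr x1 x2) :
    |√(rr x1 x2) * d2 φ t x1 x2 - x2 / rr x1 x2 * Dm (sw φ) t x1 x2|
      ≤ 3 * (bracket1 φ t x1 x2 / √(rr x1 x2)) := by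
  have e : √(rr x1 x2) * d2 φ t x1 x2 - x2 / rr x1 x2 * Dm (sw φ) t x1 x2
      = √(rr x1 x2) * (x2 / rr x1 x2 * Dp φ t x1 x2
          + x1 / rr x1 x2 * (Omg φ t x1 x2 / rr x1 x2))
        + -(x2 / rr x1 x2) * (φ t x1 x2 / (4 * √(rr x1 x2))) := by
    rw [Dm_sw hφ hr.ne', d2_eq φ t x1 x2 hr.ne']; simp only [Dp, Dm]; ring
  rw [e]
  refine abs_sqrt_mul_add_mul_div_le hr ?_ (by simpa using abs_div_rr_le_one_right x1 x2)
    (abs_le_bracket1 φ t x1 x2)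
  exact (abs_mul_add_mul_le (abs_div_rr_le_one_right x1 x2)
    (abs_div_rr_le_one_left x1 x2)).trans (abs_Dp_add_abs_Omg_div_rr_le φ t x1 x2 hr)

end ProfileError

/-- |r^{1/2}∂φ - ω̂D₋(r^{1/2}φ)| ≤ C⟨t+|x|⟩^{-1/2}[φ]₁ in the region 1 ≤ t/2 ≤ r. -/
theorem profile_approximation :
    ∃ C > 0, ∀ φ : ℝ → ℝ → ℝ → ℝ,
      ContDiffOn ℝ (⊤ : ℕ∞) (fun p : ℝ × ℝ × ℝ => φ p.1 p.2.1 p.2.2) {p : ℝ × ℝ × ℝ | 0 < p.1} →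
      ∀ t x1 x2 : ℝ, 1 ≤ t / 2 → t / 2 ≤ rr x1 x2 →
        Real.sqrt
          ((Real.sqrt (rr x1 x2) * dT φ t x1 x2 - (-1) * Dm (sw φ) t x1 x2) ^ 2
            + (Real.sqrt (rr x1 x2) * d1 φ t x1 x2 - (x1 / rr x1 x2) * Dm (sw φ) t x1 x2) ^ 2
            + (Real.sqrt (rr x1 x2) * d2 φ t x1 x2 - (x2 / rr x1 x2) * Dm (sw φ) t x1 x2) ^ 2)
        ≤ C * jb (t + rr x1 x2) ^ (-(1 / 2 : ℝ)) * bracket1 φ t x1 x2 := by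
  refine ⟨18, by norm_num, fun φ hφ t x1 x2 ht htr => ?_⟩
  have hr : 0 < rr x1 x2 := by linarith
  have hdiff : DifferentiableAt ℝ (fun p : ℝ × ℝ × ℝ => φ p.1 p.2.1 p.2.2) (t, x1, x2) :=
    (hφ.contDiffAt ((isOpen_lt continuous_const continuous_fst).mem_nhds
      (show (0 : ℝ) < t by linarith))).differentiableAt (by simp)
  have hB := bracket1_nonneg φ t x1 x2
  calc _ ≤ _ := Real.sqrt_sq_add_sq_add_sq_le _ _ _
    _ ≤ 9 * (bracket1 φ t x1 x2 / √(rr x1 x2)) := by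
        linarith [abs_sqrt_rr_mul_dT_sub_Dm_sw_le hdiff hr,
          abs_sqrt_rr_mul_d1_sub_Dm_sw_le hdiff hr, abs_sqrt_rr_mul_d2_sub_Dm_sw_le hdiff hr]
    _ = 18 * (1 / (2 * √(rr x1 x2))) * bracket1 φ t x1 x2 := by ring
    _ ≤ 18 * jb (t + rr x1 x2) ^ (-(1 / 2 : ℝ)) * bracket1 φ t x1 x2 := by
        gcongr
        exact inv_two_mul_sqrt_le_jb_rpow (by linarith) (by linarith) (by linarith)
end
end

section
/- There exists a universal constant C > 0 such that for every smooth function φ on (0,∞)×ℝ² and every (t,x) with 1 ≤ t/2 ≤ r = |x|, one has the decomposition estimate |∂φ(t,x) - ω̂D₋φ(t,x)| ≤ C⟨t+r⟩^{-1}[φ(t,x)]₁, where ω̂ = (-1, x/|x|), D₋ = (∂ᵣ - ∂ₜ)/2, and [φ]₁ = |φ|₁ + ⟨t-r⟩|∂φ|. -/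
noncomputable section

set_option maxHeartbeats 4000000 in
lemma aux_decomp (t r o1 o2 a b c F L1v L2v Ov : ℝ)
    (ht2 : 2 ≤ t) (hr1 : 1 ≤ r) (htr : t ≤ 2 * r)
    (ho : o1 ^ 2 + o2 ^ 2 = 1)
    (hL1 : L1v = r * o1 * a + t * b) (hL2 : L2v = r * o2 * a + t * c)
    (hOv : Ov = r * o1 * c - r * o2 * b)
    (hF : 0 ≤ F) :
    Real.sqrt ((a - (-1) * ((o1 * b + o2 * c - a) / 2)) ^ 2
        + (b - o1 * ((o1 * b + o2 * c - a) / 2)) ^ 2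
        + (c - o2 * ((o1 * b + o2 * c - a) / 2)) ^ 2)
      ≤ 10 * (Real.sqrt (1 + (t + r) ^ 2))⁻¹
        * (F + |L1v| + |L2v| + |Ov| + |a| + |b| + |c|
            + Real.sqrt (1 + (t - r) ^ 2) * Real.sqrt (a ^ 2 + b ^ 2 + c ^ 2)) := by
  have hrpos : (0:ℝ) < r := by linarith
  set v0 := (a + o1 * b + o2 * c) / 2 with hv0
  set w := o1 * c - o2 * b with hw
  set gN := Real.sqrt (a ^ 2 + b ^ 2 + c ^ 2) with hgN
  set J := Real.sqrt (1 + (t - r) ^ 2) with hJ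
  set Jp := Real.sqrt (1 + (t + r) ^ 2) with hJp
  have hgN0 : 0 ≤ gN := Real.sqrt_nonneg _
  have hJ0 : 0 ≤ J := Real.sqrt_nonneg _
  have hJp0 : 0 < Jp := Real.sqrt_pos.mpr (by positivity)
  have hgNa : |a| ≤ gN := by
    rw [hgN, ← Real.sqrt_sq_eq_abs]
    exact Real.sqrt_le_sqrt (by nlinarith [sq_nonneg b, sq_nonneg c])
  have hgNb : |b| ≤ gN := by
    rw [hgN, ← Real.sqrt_sq_eq_abs]
    exact Real.sqrt_le_sqrt (by nlinarith [sq_nonneg a, sq_nonneg c])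
  have hgNc : |c| ≤ gN := by
    rw [hgN, ← Real.sqrt_sq_eq_abs]
    exact Real.sqrt_le_sqrt (by nlinarith [sq_nonneg a, sq_nonneg b])
  have ho1le : |o1| ≤ 1 := by
    rw [← Real.sqrt_sq_eq_abs, show (1:ℝ) = Real.sqrt 1 by simp]
    exact Real.sqrt_le_sqrt (by nlinarith [sq_nonneg o2])
  have ho2le : |o2| ≤ 1 := by
    rw [← Real.sqrt_sq_eq_abs, show (1:ℝ) = Real.sqrt 1 by simp]
    exact Real.sqrt_le_sqrt (by nlinarith [sq_nonneg o1])
  have hJm : |t - r| ≤ J := by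
    rw [hJ, ← Real.sqrt_sq_eq_abs]
    exact Real.sqrt_le_sqrt (by linarith)
  -- main algebraic identity
  have hid1 : (a - (-1) * ((o1 * b + o2 * c - a) / 2)) ^ 2
      + (b - o1 * ((o1 * b + o2 * c - a) / 2)) ^ 2
      + (c - o2 * ((o1 * b + o2 * c - a) / 2)) ^ 2 = 2 * v0 ^ 2 + w ^ 2 := by
    rw [hv0, hw]
    linear_combination (((o1 * b + o2 * c - a) / 2) ^ 2 - b ^ 2 - c ^ 2) * ho
  have hDmle : |(o1 * b + o2 * c - a) / 2| ≤ 3 / 2 * gN := by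
    have h1 : |o1 * b + o2 * c - a| ≤ |o1| * |b| + |o2| * |c| + |a| := by
      calc |o1 * b + o2 * c - a| ≤ |o1 * b + o2 * c| + |a| := abs_sub _ _
        _ ≤ |o1 * b| + |o2 * c| + |a| := by linarith [abs_add_le (o1 * b) (o2 * c)]
        _ = |o1| * |b| + |o2| * |c| + |a| := by rw [abs_mul, abs_mul]
    have h2 : |o1| * |b| ≤ gN :=
      le_trans (mul_le_mul_of_nonneg_right ho1le (abs_nonneg b)) (by rw [one_mul]; exact hgNb)
    have h3 : |o2| * |c| ≤ gN :=
      le_trans (mul_le_mul_of_nonneg_right ho2le (abs_nonneg c)) (by rw [one_mul]; exact hgNc)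
    rw [abs_div, abs_two, div_le_iff₀ (by norm_num : (0:ℝ) < 2)]
    linarith
  have hid2 : (t + r) * v0 = o1 * L1v + o2 * L2v - (t - r) * ((o1 * b + o2 * c - a) / 2) := by
    rw [hL1, hL2, hv0]
    linear_combination (-(r * a)) * ho
  have hv0le : (t + r) * |v0| ≤ |L1v| + |L2v| + 3 / 2 * (J * gN) := by
    have heq : (t + r) * |v0| = |(t + r) * v0| := by
      rw [abs_mul, abs_of_pos (by linarith : (0:ℝ) < t + r)]
    rw [heq, hid2]
    have h1 : |o1 * L1v + o2 * L2v - (t - r) * ((o1 * b + o2 * c - a) / 2)|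
        ≤ |o1| * |L1v| + |o2| * |L2v| + |t - r| * |(o1 * b + o2 * c - a) / 2| := by
      calc _ ≤ |o1 * L1v + o2 * L2v| + |(t - r) * ((o1 * b + o2 * c - a) / 2)| := abs_sub _ _
        _ ≤ |o1 * L1v| + |o2 * L2v| + |(t - r) * ((o1 * b + o2 * c - a) / 2)| := by
            linarith [abs_add_le (o1 * L1v) (o2 * L2v)]
        _ = |o1| * |L1v| + |o2| * |L2v| + |t - r| * |(o1 * b + o2 * c - a) / 2| := by
            rw [abs_mul, abs_mul, abs_mul]
    have h2 : |o1| * |L1v| ≤ |L1v| :=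
      le_trans (mul_le_mul_of_nonneg_right ho1le (abs_nonneg _)) (by rw [one_mul])
    have h3 : |o2| * |L2v| ≤ |L2v| :=
      le_trans (mul_le_mul_of_nonneg_right ho2le (abs_nonneg _)) (by rw [one_mul])
    have h4 : |t - r| * |(o1 * b + o2 * c - a) / 2| ≤ J * (3 / 2 * gN) :=
      mul_le_mul hJm hDmle (abs_nonneg _) hJ0
    nlinarith
  have hwle : (t + r) * |w| ≤ 3 * |Ov| := by
    have hwO : |Ov| = r * |w| := by
      rw [hOv, hw, show r * o1 * c - r * o2 * b = r * (o1 * c - o2 * b) by ring, abs_mul,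
        abs_of_pos hrpos]
    have htr3 : t + r ≤ 3 * r := by linarith
    nlinarith [abs_nonneg w]
  have hsq : Real.sqrt (2 * v0 ^ 2 + w ^ 2) ≤ 2 * |v0| + |w| := by
    rw [show 2 * |v0| + |w| = Real.sqrt ((2 * |v0| + |w|) ^ 2) from
      (Real.sqrt_sq (by positivity)).symm]
    apply Real.sqrt_le_sqrt
    nlinarith [sq_abs v0, sq_abs w, mul_nonneg (abs_nonneg v0) (abs_nonneg w)]
  set B := F + |L1v| + |L2v| + |Ov| + |a| + |b| + |c| + J * gN with hB
  have hB0 : 0 ≤ B := by positivity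
  have hcomb : (t + r) * (2 * |v0| + |w|) ≤ 3 * B := by
    nlinarith [mul_nonneg hJ0 hgN0, abs_nonneg L1v, abs_nonneg L2v, abs_nonneg Ov,
      abs_nonneg a, abs_nonneg b, abs_nonneg c]
  have hJple : Jp ≤ 2 * (t + r) := by
    rw [hJp, show 2 * (t + r) = Real.sqrt ((2 * (t + r)) ^ 2) from
      (Real.sqrt_sq (by linarith)).symm]
    exact Real.sqrt_le_sqrt (by nlinarith)
  calc Real.sqrt ((a - (-1) * ((o1 * b + o2 * c - a) / 2)) ^ 2
        + (b - o1 * ((o1 * b + o2 * c - a) / 2)) ^ 2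
        + (c - o2 * ((o1 * b + o2 * c - a) / 2)) ^ 2)
      = Real.sqrt (2 * v0 ^ 2 + w ^ 2) := by rw [hid1]
    _ ≤ 2 * |v0| + |w| := hsq
    _ ≤ 10 * Jp⁻¹ * B := by
        rw [show 10 * Jp⁻¹ * B = 10 * B / Jp by ring, le_div_iff₀ hJp0]
        nlinarith [mul_nonneg (mul_nonneg two_pos.le (abs_nonneg v0)) hJp0.le,
          mul_nonneg (abs_nonneg w) hJp0.le,
          mul_le_mul_of_nonneg_left hJple (by positivity : (0:ℝ) ≤ 2 * |v0| + |w|)]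

/-- |∂φ - ω̂D₋φ| ≤ C⟨t+r⟩^{-1}[φ]₁ in the region 1 ≤ t/2 ≤ r. -/
theorem derivative_decomposition :
    ∃ C > 0, ∀ φ : ℝ → ℝ → ℝ → ℝ,
      ContDiffOn ℝ (⊤ : ℕ∞) (fun p : ℝ × ℝ × ℝ => φ p.1 p.2.1 p.2.2) {p : ℝ × ℝ × ℝ | 0 < p.1} →
      ∀ t x1 x2 : ℝ, 1 ≤ t / 2 → t / 2 ≤ rr x1 x2 →
        Real.sqrt
          ((dT φ t x1 x2 - (-1) * Dm φ t x1 x2) ^ 2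
            + (d1 φ t x1 x2 - (x1 / rr x1 x2) * Dm φ t x1 x2) ^ 2
            + (d2 φ t x1 x2 - (x2 / rr x1 x2) * Dm φ t x1 x2) ^ 2)
        ≤ C * (jb (t + rr x1 x2))⁻¹ * bracket1 φ t x1 x2 := by
  refine ⟨10, by norm_num, ?_⟩
  intro φ _ t x1 x2 ht htr
  have hr2 : rr x1 x2 ^ 2 = x1 ^ 2 + x2 ^ 2 := Real.sq_sqrt (by positivity)
  have hrpos : 0 < rr x1 x2 := by linarith
  have hx1 : x1 = rr x1 x2 * (x1 / rr x1 x2) := by field_simp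
  have hx2 : x2 = rr x1 x2 * (x2 / rr x1 x2) := by field_simp
  have ho : (x1 / rr x1 x2) ^ 2 + (x2 / rr x1 x2) ^ 2 = 1 := by
    field_simp
    linarith [hr2]
  have hL1' : L1 φ t x1 x2
      = rr x1 x2 * (x1 / rr x1 x2) * dT φ t x1 x2 + t * d1 φ t x1 x2 := by
    simp only [L1]; rw [← hx1]
  have hL2' : L2 φ t x1 x2
      = rr x1 x2 * (x2 / rr x1 x2) * dT φ t x1 x2 + t * d2 φ t x1 x2 := by
    simp only [L2]; rw [← hx2]
  have hOv' : Omg φ t x1 x2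
      = rr x1 x2 * (x1 / rr x1 x2) * d2 φ t x1 x2
        - rr x1 x2 * (x2 / rr x1 x2) * d1 φ t x1 x2 := by
    simp only [Omg]; rw [← hx1, ← hx2]
  have key := aux_decomp t (rr x1 x2) (x1 / rr x1 x2) (x2 / rr x1 x2)
    (dT φ t x1 x2) (d1 φ t x1 x2) (d2 φ t x1 x2) (|φ t x1 x2|)
    (L1 φ t x1 x2) (L2 φ t x1 x2) (Omg φ t x1 x2)
    (by linarith) (by linarith) (by linarith) ho hL1' hL2' hOv' (abs_nonneg _)
  have hDmeq : Dm φ t x1 x2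
      = ((x1 / rr x1 x2) * d1 φ t x1 x2 + (x2 / rr x1 x2) * d2 φ t x1 x2
          - dT φ t x1 x2) / 2 := by
    simp only [Dm, dr]
  rw [hDmeq]
  have hbr : bracket1 φ t x1 x2
      = |φ t x1 x2| + |L1 φ t x1 x2| + |L2 φ t x1 x2| + |Omg φ t x1 x2|
        + |dT φ t x1 x2| + |d1 φ t x1 x2| + |d2 φ t x1 x2|
        + Real.sqrt (1 + (t - rr x1 x2) ^ 2)
          * Real.sqrt (dT φ t x1 x2 ^ 2 + d1 φ t x1 x2 ^ 2 + d2 φ t x1 x2 ^ 2) := by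
    simp only [bracket1, norm1, jb, gradNorm]
  rw [hbr, show jb (t + rr x1 x2) = Real.sqrt (1 + (t + rr x1 x2) ^ 2) from rfl]
  exact key
end
end
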